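/- The function g(p) = 2p(1−p)/(1−2p+2p^2)^2 on (0,1) is a probability density: it integrates to 1, is symmetric about 1/2, and has variance ∫_0^1 (p−1/2)^2 g(p) dp = (π−3)/4. -/

import Mathlib

open Real

/-- Stationary density of the status-quo reference rule. -/
noncomputable def statDens (p : ℝ) : ℝ := 2 * p * (1 - p) / (1 - 2*p + 2*p^2)^2

/-!
In the centred variable `u = 2p - 1` the density becomes `2 (1 - u²) / (u² + 1)²`, which is the
derivative of `2 u / (u² + 1)`, while `(p - 1/2)² g(p) = u² (1 - u²) / (2 (u² + 1)²)` is the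
derivative of `(2 arctan u - u - u / (u² + 1)) / 2`; both integrals over `[-1, 1]` are then
read off from `arctan (±1) = ±π/4`.
-/

open intervalIntegral

lemma hasDerivAt_div_sq_add_one (u : ℝ) :
    HasDerivAt (fun x : ℝ => x / (x ^ 2 + 1)) ((1 - u ^ 2) / (u ^ 2 + 1) ^ 2) u := by
  have hden : HasDerivAt (fun x : ℝ => x ^ 2 + 1) (2 * u) u := by
    simpa using (hasDerivAt_pow 2 u).add_const 1
  refine ((hasDerivAt_id' u).div hden (by positivity)).congr_deriv ?_
  field_simp
  ring

lemma hasDerivAt_two_mul_arctan_sub (u : ℝ) :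
    HasDerivAt (fun x : ℝ => 2 * arctan x - x - x / (x ^ 2 + 1))
      (u ^ 2 * (1 - u ^ 2) / (u ^ 2 + 1) ^ 2) u := by
  have h := (((hasDerivAt_arctan u).const_mul 2).sub (hasDerivAt_id u)).sub
    (hasDerivAt_div_sq_add_one u)
  refine h.congr_deriv ?_
  field_simp
  ring

lemma integral_one_sub_sq_div_sq_add_one_sq :
    ∫ u in (-1 : ℝ)..1, (1 - u ^ 2) / (u ^ 2 + 1) ^ 2 = 1 := by
  rw [integral_eq_sub_of_hasDerivAt (fun u _ => hasDerivAt_div_sq_add_one u)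
    (by apply Continuous.intervalIntegrable; fun_prop (disch := intro; positivity))]
  norm_num

lemma integral_sq_mul_one_sub_sq_div_sq_add_one_sq :
    ∫ u in (-1 : ℝ)..1, u ^ 2 * (1 - u ^ 2) / (u ^ 2 + 1) ^ 2 = π - 3 := by
  rw [integral_eq_sub_of_hasDerivAt (fun u _ => hasDerivAt_two_mul_arctan_sub u)
    (by apply Continuous.intervalIntegrable; fun_prop (disch := intro; positivity))]
  norm_num [arctan_one, arctan_neg]
  ring

lemma statDens_eq (p : ℝ) :
    statDens p = 2 * ((1 - (2 * p - 1) ^ 2) / ((2 * p - 1) ^ 2 + 1) ^ 2) := by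
  have : (2 * p - 1) ^ 2 + 1 = 2 * (1 - 2 * p + 2 * p ^ 2) := by ring
  rw [statDens, this]
  field_simp
  ring

lemma sq_sub_half_mul_statDens (p : ℝ) :
    (p - 1 / 2) ^ 2 * statDens p =
      2⁻¹ * ((2 * p - 1) ^ 2 * (1 - (2 * p - 1) ^ 2) / ((2 * p - 1) ^ 2 + 1) ^ 2) := by
  rw [statDens_eq]
  ring

lemma statDens_nonneg {p : ℝ} (hp : p ∈ Set.Icc 0 1) : 0 ≤ statDens p := by
  rw [statDens, mul_assoc]
  exact div_nonneg (mul_nonneg zero_le_two (mul_nonneg hp.1 (sub_nonneg.2 hp.2))) (sq_nonneg _)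

lemma statDens_one_sub (p : ℝ) : statDens (1 - p) = statDens p := by
  rw [statDens, statDens]
  ring_nf

lemma integral_statDens : ∫ p in (0 : ℝ)..1, statDens p = 1 := by
  simp_rw [statDens_eq]
  rw [integral_const_mul, integral_comp_mul_sub (fun u => (1 - u ^ 2) / (u ^ 2 + 1) ^ 2)
    two_ne_zero]
  norm_num [integral_one_sub_sq_div_sq_add_one_sq]

lemma integral_sq_sub_half_mul_statDens :
    ∫ p in (0 : ℝ)..1, (p - 1 / 2) ^ 2 * statDens p = (π - 3) / 4 := by
  simp_rw [sq_sub_half_mul_statDens]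
  rw [integral_const_mul, integral_comp_mul_sub
    (fun u => u ^ 2 * (1 - u ^ 2) / (u ^ 2 + 1) ^ 2) two_ne_zero]
  norm_num [integral_sq_mul_one_sub_sq_div_sq_add_one_sq]
  ring

theorem stmt_3 :
    (∀ p ∈ Set.Ioo (0:ℝ) 1, 0 ≤ statDens p) ∧
    (∫ p in (0:ℝ)..1, statDens p) = 1 ∧
    (∀ p ∈ Set.Ioo (0:ℝ) 1, statDens p = statDens (1 - p)) ∧
    (∫ p in (0:ℝ)..1, (p - 1/2)^2 * statDens p) = (π - 3) / 4 :=
  ⟨fun _ hp => statDens_nonneg (Set.Ioo_subset_Icc_self hp), integral_statDens,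
    fun p _ => (statDens_one_sub p).symm, integral_sq_sub_half_mul_statDens⟩
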